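/- arXiv:1408.4757 — 2 statements merged into one kernel-verified Lean document; each statement's English description precedes it below -/
import Mathlib

section
/- Let G be a lattice-ordered abelian group. The lattice of convex ℓ-subgroups of G is distributive; in particular, if K, A, B are convex ℓ-subgroups with A ∩ B ⊆ K, then K = (AK) ∩ (BK), where AK denotes the convex ℓ-subgroup generated by A ∪ K (equal to the product {ak}). -/
/-- A convex ℓ-subgroup: a subgroup that is a sublattice and convex. -/
def IsConvexLSubgroup {G : Type*} [CommGroup G] [Lattice G] (K : Subgroup G) : Prop :=
  (∀ a b c : G, a ∈ K → c ∈ K → a ≤ b → b ≤ c → b ∈ K) ∧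
  (∀ a b : G, a ∈ K → b ∈ K → a ⊔ b ∈ K ∧ a ⊓ b ∈ K)

/-- The smallest convex ℓ-subgroup containing a set. -/
def convexLClosure {G : Type*} [CommGroup G] [Lattice G] (S : Set G) : Subgroup G :=
  sInf {H : Subgroup G | IsConvexLSubgroup H ∧ S ⊆ ↑H}

section Aux

variable {G : Type*} [CommGroup G] [Lattice G] [CovariantClass G G (· * ·) (· ≤ ·)]

/-- Riesz decomposition for abelian ℓ-groups. -/
lemma riesz_decomp {c a b : G} (hc : 1 ≤ c) (ha : 1 ≤ a) (hb : 1 ≤ b) (hcab : c ≤ a * b) :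
    ∃ a' b' : G, 1 ≤ a' ∧ a' ≤ a ∧ 1 ≤ b' ∧ b' ≤ b ∧ c = a' * b' := by
  refine ⟨c ⊓ a, c * (c ⊓ a)⁻¹, le_inf hc ha, inf_le_right, ?_, ?_, by rw [mul_comm c, mul_inv_cancel_left]⟩
  · rw [le_mul_inv_iff_mul_le, one_mul]; exact inf_le_left
  · have : c * (c ⊓ a)⁻¹ = 1 ⊔ c * a⁻¹ := by
      rw [inv_inf, mul_sup, mul_inv_cancel]
    rw [this]
    exact sup_le hb (by rwa [mul_inv_le_iff_le_mul, mul_comm])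

lemma mul_le_sup_one_mul_sup_one (u v : G) : u * v ≤ (u ⊔ 1) * (v ⊔ 1) :=
  mul_le_mul' le_sup_left le_sup_left

/-- The product `A ⊔ K` of two convex ℓ-subgroups is a convex ℓ-subgroup. -/
lemma isConvexL_sup {A K : Subgroup G} (hA : IsConvexLSubgroup A) (hK : IsConvexLSubgroup K) :
    IsConvexLSubgroup (A ⊔ K) := by
  have hmem : ∀ x : G, x ∈ A ⊔ K ↔ ∃ a ∈ A, ∃ k ∈ K, a * k = x := fun x => Subgroup.mem_sup
  have hconv : ∀ x g y : G, x ∈ A ⊔ K → y ∈ A ⊔ K → x ≤ g → g ≤ y → g ∈ A ⊔ K := by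
    intro x g y hx hy hxg hgy
    obtain ⟨a₁, ha₁, k₁, hk₁, rfl⟩ := (hmem x).1 hx
    obtain ⟨a₂, ha₂, k₂, hk₂, rfl⟩ := (hmem y).1 hy
    set hval : G := g * (a₁ * k₁)⁻¹ with hhval
    have h1 : 1 ≤ hval := by rw [hhval, le_mul_inv_iff_mul_le, one_mul]; exact hxg
    have h2 : hval ≤ (a₂ * a₁⁻¹ ⊔ 1) * (k₂ * k₁⁻¹ ⊔ 1) := by
      have hle : hval ≤ (a₂ * a₁⁻¹) * (k₂ * k₁⁻¹) := by
        rw [hhval, mul_inv_le_iff_le_mul]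
        calc g ≤ a₂ * k₂ := hgy
        _ = a₂ * a₁⁻¹ * (k₂ * k₁⁻¹) * (a₁ * k₁) := by simp [mul_assoc, mul_comm, mul_left_comm]
      exact hle.trans (mul_le_sup_one_mul_sup_one _ _)
    obtain ⟨a', k', ha'1, ha'le, hk'1, hk'le, hdec⟩ :=
      riesz_decomp h1 le_sup_right le_sup_right h2
    have ha'A : a' ∈ A := by
      refine hA.1 1 a' (a₂ * a₁⁻¹ ⊔ 1) A.one_mem ?_ ha'1 ha'le
      exact (hA.2 _ 1 (A.mul_mem ha₂ (A.inv_mem ha₁)) A.one_mem).1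
    have hk'K : k' ∈ K := by
      refine hK.1 1 k' (k₂ * k₁⁻¹ ⊔ 1) K.one_mem ?_ hk'1 hk'le
      exact (hK.2 _ 1 (K.mul_mem hk₂ (K.inv_mem hk₁)) K.one_mem).1
    have hg : g = (a' * a₁) * (k' * k₁) := by
      have hg' : g = hval * (a₁ * k₁) := by rw [hhval, inv_mul_cancel_right]
      rw [hg', hdec]; simp [mul_assoc, mul_comm, mul_left_comm]
    rw [hmem]
    exact ⟨a' * a₁, A.mul_mem ha'A ha₁, k' * k₁, K.mul_mem hk'K hk₁, hg.symm⟩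
  refine ⟨hconv, ?_⟩
  intro x y hx hy
  obtain ⟨a₁, ha₁, k₁, hk₁, rfl⟩ := (hmem x).1 hx
  obtain ⟨a₂, ha₂, k₂, hk₂, rfl⟩ := (hmem y).1 hy
  have hsupmem : (a₁ ⊔ a₂) * (k₁ ⊔ k₂) ∈ A ⊔ K := (hmem _).2
    ⟨a₁ ⊔ a₂, (hA.2 _ _ ha₁ ha₂).1, k₁ ⊔ k₂, (hK.2 _ _ hk₁ hk₂).1, rfl⟩
  have hinfmem : (a₁ ⊓ a₂) * (k₁ ⊓ k₂) ∈ A ⊔ K := (hmem _).2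
    ⟨a₁ ⊓ a₂, (hA.2 _ _ ha₁ ha₂).2, k₁ ⊓ k₂, (hK.2 _ _ hk₁ hk₂).2, rfl⟩
  constructor
  · refine hconv (a₁ * k₁) _ ((a₁ ⊔ a₂) * (k₁ ⊔ k₂)) hx hsupmem le_sup_left ?_
    exact sup_le (mul_le_mul' le_sup_left le_sup_left) (mul_le_mul' le_sup_right le_sup_right)
  · refine hconv ((a₁ ⊓ a₂) * (k₁ ⊓ k₂)) _ (a₁ * k₁) hinfmem hx ?_ inf_le_left
    exact le_inf (mul_le_mul' inf_le_left inf_le_left) (mul_le_mul' inf_le_right inf_le_right)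

lemma convexLClosure_union_eq {A K : Subgroup G} (hA : IsConvexLSubgroup A)
    (hK : IsConvexLSubgroup K) :
    convexLClosure ((A : Set G) ∪ (K : Set G)) = A ⊔ K := by
  apply le_antisymm
  · exact sInf_le ⟨isConvexL_sup hA hK, Set.union_subset
      (SetLike.coe_subset_coe.2 le_sup_left) (SetLike.coe_subset_coe.2 le_sup_right)⟩
  · refine le_sInf fun H hH => sup_le ?_ ?_
    · exact SetLike.coe_subset_coe.1 (Set.subset_union_left.trans hH.2)
    · exact SetLike.coe_subset_coe.1 (Set.subset_union_right.trans hH.2)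

lemma mabs_mem_of_lattice {A : Subgroup G} (hA : IsConvexLSubgroup A) {a : G} (ha : a ∈ A) :
    |a|ₘ ∈ A := (hA.2 a a⁻¹ ha (A.inv_mem ha)).1

end Aux

/-- Distributivity of the lattice of convex ℓ-subgroups: if `A ∩ B ⊆ K` then
`K = (AK) ∩ (BK)`, where `AK`, the convex ℓ-subgroup generated by `A ∪ K`,
equals the product set `{ak : a ∈ A, k ∈ K}`. -/
theorem convexL_lattice_distributive {G : Type*} [CommGroup G] [Lattice G]
    [CovariantClass G G (· * ·) (· ≤ ·)]
    (K A B : Subgroup G)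
    (hK : IsConvexLSubgroup K) (hA : IsConvexLSubgroup A) (hB : IsConvexLSubgroup B)
    (h : (A : Set G) ∩ (B : Set G) ⊆ (K : Set G)) :
    (K : Set G) = (convexLClosure ((A : Set G) ∪ (K : Set G)) : Set G) ∩ (convexLClosure ((B : Set G) ∪ (K : Set G)) : Set G) ∧
    (convexLClosure ((A : Set G) ∪ (K : Set G)) : Set G) = {x : G | ∃ a ∈ A, ∃ k ∈ K, x = a * k} ∧
    (convexLClosure ((B : Set G) ∪ (K : Set G)) : Set G) = {x : G | ∃ b ∈ B, ∃ k ∈ K, x = b * k} := by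
  have hAK := convexLClosure_union_eq hA hK
  have hBK := convexLClosure_union_eq hB hK
  refine ⟨?_, ?_, ?_⟩
  · ext x
    simp only [Set.mem_inter_iff, SetLike.mem_coe, hAK, hBK]
    constructor
    · intro hx
      exact ⟨Subgroup.mem_sup_right hx, Subgroup.mem_sup_right hx⟩
    · rintro ⟨hx1, hx2⟩
      obtain ⟨a₀, ha₀, k₀, hk₀, hx1eq⟩ := Subgroup.mem_sup.1 hx1
      obtain ⟨b₀, hb₀, k₂₀, hk₂₀, hx2eq⟩ := Subgroup.mem_sup.1 hx2
      have habs1 : |x|ₘ ≤ |a₀|ₘ * |k₀|ₘ := by rw [← hx1eq]; exact mabs_mul_le a₀ k₀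
      have habs2 : |x|ₘ ≤ |b₀|ₘ * |k₂₀|ₘ := by rw [← hx2eq]; exact mabs_mul_le b₀ k₂₀
      obtain ⟨a', k₁', ha'1, ha'le, hk₁'1, hk₁'le, hxdec⟩ :=
        riesz_decomp (one_le_mabs x) (one_le_mabs a₀) (one_le_mabs k₀) habs1
      have ha'A : a' ∈ A :=
        hA.1 1 a' |a₀|ₘ A.one_mem (mabs_mem_of_lattice hA ha₀) ha'1 ha'le
      have hk₁'K : k₁' ∈ K :=
        hK.1 1 k₁' |k₀|ₘ K.one_mem (mabs_mem_of_lattice hK hk₀) hk₁'1 hk₁'le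
      have ha'lex : a' ≤ |x|ₘ := by
        rw [hxdec]; exact le_mul_of_one_le_right' hk₁'1
      obtain ⟨b', k', hb'1, hb'le, hk'1, hk'le, ha'dec⟩ :=
        riesz_decomp ha'1 (one_le_mabs b₀) (one_le_mabs k₂₀) (ha'lex.trans habs2)
      have hb'B : b' ∈ B :=
        hB.1 1 b' |b₀|ₘ B.one_mem (mabs_mem_of_lattice hB hb₀) hb'1 hb'le
      have hb'A : b' ∈ A := by
        refine hA.1 1 b' a' A.one_mem ha'A hb'1 ?_
        rw [ha'dec]; exact le_mul_of_one_le_right' hk'1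
      have hb'K : b' ∈ K := h ⟨hb'A, hb'B⟩
      have hk'K : k' ∈ K :=
        hK.1 1 k' |k₂₀|ₘ K.one_mem (mabs_mem_of_lattice hK hk₂₀) hk'1 hk'le
      have habsK : |x|ₘ ∈ K := by
        rw [hxdec, ha'dec]; exact K.mul_mem (K.mul_mem hb'K hk'K) hk₁'K
      have hposK : x ⊔ 1 ∈ K :=
        hK.1 1 (x ⊔ 1) |x|ₘ K.one_mem habsK le_sup_right
          (sup_le (le_mabs_self x) (one_le_mabs x))
      have hnegK : x⁻¹ ⊔ 1 ∈ K :=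
        hK.1 1 (x⁻¹ ⊔ 1) |x|ₘ K.one_mem habsK le_sup_right
          (sup_le (inv_le_mabs x) (one_le_mabs x))
      have hxeq : x = (x ⊓ 1) * (x ⊔ 1) := by rw [inf_mul_sup, mul_one]
      have hinfK : x ⊓ 1 ∈ K := by
        have : (x⁻¹ ⊔ 1)⁻¹ = x ⊓ 1 := by rw [inv_sup, inv_inv, inv_one]
        rw [← this]; exact K.inv_mem hnegK
      rw [hxeq]; exact K.mul_mem hinfK hposK
  · ext x
    simp only [SetLike.mem_coe, hAK, Set.mem_setOf_eq, Subgroup.mem_sup]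
    constructor
    · rintro ⟨a, ha, k, hk, rfl⟩; exact ⟨a, ha, k, hk, rfl⟩
    · rintro ⟨a, ha, k, hk, rfl⟩; exact ⟨a, ha, k, hk, rfl⟩
  · ext x
    simp only [SetLike.mem_coe, hBK, Set.mem_setOf_eq, Subgroup.mem_sup]
    constructor
    · rintro ⟨a, ha, k, hk, rfl⟩; exact ⟨a, ha, k, hk, rfl⟩
    · rintro ⟨a, ha, k, hk, rfl⟩; exact ⟨a, ha, k, hk, rfl⟩
end

section
/- Let G be a lattice-ordered abelian group (multiplicative) and N a subgroup of G. Then the set of all elements of the form ⋁ᵢ sᵢhᵢ (i = 1, …, n, n ∈ ℕ) with hᵢ ∈ N, sᵢ ∈ G and ⋁ᵢ sᵢ = 1 is the smallest kernel (convex ℓ-subgroup) of G containing N. -/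
/-- A kernel of the idempotent semifield attached to a lattice-ordered abelian
group `G` (addition = join): a subgroup `K` such that `a, b ∈ K` and
`α ⊔ β = 1` imply `αa ⊔ βb ∈ K`. -/
def IsKernel {G : Type*} [CommGroup G] [Lattice G] (K : Subgroup G) : Prop :=
  ∀ a b α β : G, a ∈ K → b ∈ K → α ⊔ β = 1 → α * a ⊔ β * b ∈ K

section Aux

set_option linter.unusedSectionVars false
set_option maxHeartbeats 1000000

variable {G : Type*} [CommGroup G] [Lattice G]
    [CovariantClass G G (· * ·) (· ≤ ·)]

lemma KerAux.mul_sup' {ι : Type*} (s : Finset ι) (f : ι → G) (a : G) (hs : s.Nonempty) :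
    a * s.sup' hs f = s.sup' hs fun i ↦ a * f i :=
  map_finset_sup' (OrderIso.mulLeft a) hs f

lemma KerAux.sup'_mul {ι : Type*} (s : Finset ι) (f : ι → G) (a : G) (hs : s.Nonempty) :
    s.sup' hs f * a = s.sup' hs fun i ↦ f i * a :=
  map_finset_sup' (OrderIso.mulRight a) hs f

lemma KerAux.sup'_comp_equiv {α β : Type*} [Fintype α] [Fintype β] [Nonempty α] [Nonempty β]
    (e : α ≃ β) (f : β → G) :
    Finset.univ.sup' Finset.univ_nonempty (fun a => f (e a)) =
      Finset.univ.sup' Finset.univ_nonempty f := by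
  apply le_antisymm
  · exact Finset.sup'_le _ _ fun a _ => Finset.le_sup' f (Finset.mem_univ (e a))
  · refine Finset.sup'_le _ _ fun b _ => ?_
    have h := Finset.le_sup' (fun a => f (e a)) (Finset.mem_univ (e.symm b))
    simpa using h

lemma KerAux.sup'_sum {α β : Type*} [Fintype α] [Fintype β] [Nonempty α] [Nonempty β]
    (f : α ⊕ β → G) :
    Finset.univ.sup' Finset.univ_nonempty f =
      (Finset.univ.sup' Finset.univ_nonempty (fun a => f (Sum.inl a))) ⊔
        (Finset.univ.sup' Finset.univ_nonempty (fun b => f (Sum.inr b))) := by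
  apply le_antisymm
  · refine Finset.sup'_le _ _ fun x _ => ?_
    rcases x with a | b
    · exact le_sup_of_le_left
        (Finset.le_sup' (fun a => f (Sum.inl a)) (Finset.mem_univ a))
    · exact le_sup_of_le_right
        (Finset.le_sup' (fun b => f (Sum.inr b)) (Finset.mem_univ b))
  · refine sup_le (Finset.sup'_le _ _ fun a _ => Finset.le_sup' f (Finset.mem_univ (Sum.inl a)))
      (Finset.sup'_le _ _ fun b _ => Finset.le_sup' f (Finset.mem_univ (Sum.inr b)))

lemma KerAux.sup'_univ_prod {α β : Type*} [Fintype α] [Fintype β] [Nonempty α] [Nonempty β]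
    (f : α × β → G) :
    Finset.univ.sup' Finset.univ_nonempty f =
      Finset.univ.sup' Finset.univ_nonempty
        (fun a => Finset.univ.sup' Finset.univ_nonempty (fun b => f (a, b))) := by
  apply le_antisymm
  · refine Finset.sup'_le _ _ fun p _ => ?_
    refine le_trans (Finset.le_sup' (fun b => f (p.1, b)) (Finset.mem_univ p.2)) ?_
    exact Finset.le_sup'
      (fun a => Finset.univ.sup' Finset.univ_nonempty (fun b => f (a, b))) (Finset.mem_univ p.1)
  · refine Finset.sup'_le _ _ fun a _ => Finset.sup'_le _ _ fun b _ => ?_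
    exact Finset.le_sup' f (Finset.mem_univ (a, b))

lemma KerAux.sup'_fin_one (f : Fin 1 → G) :
    Finset.univ.sup' Finset.univ_nonempty f = f 0 := by
  apply le_antisymm
  · exact Finset.sup'_le _ _ fun i _ => by rw [Subsingleton.elim i 0]
  · exact Finset.le_sup' f (Finset.mem_univ 0)

/-- The candidate set, as a subgroup. -/
def KerAux.S (N : Subgroup G) : Subgroup G where
  carrier := {x : G | ∃ (n : ℕ) (s h : Fin (n + 1) → G),
        (∀ i, h i ∈ N) ∧
        Finset.univ.sup' Finset.univ_nonempty s = 1 ∧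
        x = Finset.univ.sup' Finset.univ_nonempty (fun i => s i * h i)}
  one_mem' := by
    refine ⟨0, fun _ => 1, fun _ => 1, fun _ => N.one_mem, ?_, ?_⟩ <;> simp
  inv_mem' := by
    rintro x ⟨n, s, h, hh, hs, hx⟩
    refine ⟨n, fun i => x⁻¹ * (s i * h i), fun i => (h i)⁻¹,
      fun i => N.inv_mem (hh i), ?_, ?_⟩
    · rw [← KerAux.mul_sup', ← hx, inv_mul_cancel]
    · have key : ∀ i : Fin (n+1), x⁻¹ * (s i * h i) * (h i)⁻¹ = x⁻¹ * s i := by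
        intro i; group
      simp_rw [key]
      rw [← KerAux.mul_sup', hs, mul_one]
  mul_mem' := by
    rintro x y ⟨n, s, h, hh, hs, hx⟩ ⟨m, t, k, hk, ht, hy⟩
    have e : Fin (n + 1) × Fin (m + 1) ≃ Fin (n * m + n + m + 1) :=
      finProdFinEquiv.trans (finCongr (by ring))
    refine ⟨n * m + n + m, fun i => (s (e.symm i).1) * (t (e.symm i).2),
      fun i => (h (e.symm i).1) * (k (e.symm i).2),
      fun i => N.mul_mem (hh _) (hk _), ?_, ?_⟩
    · calc Finset.univ.sup' Finset.univ_nonempty (fun i => s (e.symm i).1 * t (e.symm i).2)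
          = Finset.univ.sup' Finset.univ_nonempty
            (fun p : Fin (n+1) × Fin (m+1) => s p.1 * t p.2) :=
            KerAux.sup'_comp_equiv e.symm (fun p : Fin (n+1) × Fin (m+1) => s p.1 * t p.2)
        _ = Finset.univ.sup' Finset.univ_nonempty
            (fun i : Fin (n+1) => Finset.univ.sup' Finset.univ_nonempty
              (fun j : Fin (m+1) => s i * t j)) := KerAux.sup'_univ_prod _
        _ = Finset.univ.sup' Finset.univ_nonempty
            (fun i : Fin (n+1) => s i * Finset.univ.sup' Finset.univ_nonempty t) := by
            refine Finset.sup'_congr _ rfl fun i _ => ?_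
            rw [KerAux.mul_sup']
        _ = 1 := by rw [ht]; rw [show (fun i : Fin (n+1) => s i * (1:G)) = s from funext fun i => mul_one _, hs]
    · symm
      calc Finset.univ.sup' Finset.univ_nonempty
            (fun i => s (e.symm i).1 * t (e.symm i).2 * (h (e.symm i).1 * k (e.symm i).2))
          = Finset.univ.sup' Finset.univ_nonempty
            (fun p : Fin (n+1) × Fin (m+1) => s p.1 * t p.2 * (h p.1 * k p.2)) :=
            KerAux.sup'_comp_equiv e.symm
              (fun p : Fin (n+1) × Fin (m+1) => s p.1 * t p.2 * (h p.1 * k p.2))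
        _ = Finset.univ.sup' Finset.univ_nonempty
            (fun p : Fin (n+1) × Fin (m+1) => (s p.1 * h p.1) * (t p.2 * k p.2)) := by
            refine Finset.sup'_congr _ rfl fun p _ => ?_
            exact mul_mul_mul_comm _ _ _ _
        _ = Finset.univ.sup' Finset.univ_nonempty
            (fun i : Fin (n+1) => Finset.univ.sup' Finset.univ_nonempty
              (fun j : Fin (m+1) => (s i * h i) * (t j * k j))) := KerAux.sup'_univ_prod _
        _ = Finset.univ.sup' Finset.univ_nonempty
            (fun i : Fin (n+1) => (s i * h i) *
              Finset.univ.sup' Finset.univ_nonempty (fun j => t j * k j)) := by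
            refine Finset.sup'_congr _ rfl fun i _ => ?_
            rw [KerAux.mul_sup']
        _ = Finset.univ.sup' Finset.univ_nonempty (fun i : Fin (n+1) => s i * h i) *
              Finset.univ.sup' Finset.univ_nonempty (fun j => t j * k j) := by
            rw [KerAux.sup'_mul]
        _ = x * y := by rw [← hx, ← hy]

lemma KerAux.le_S (N : Subgroup G) : N ≤ KerAux.S N := by
  intro x hx
  exact ⟨0, fun _ => 1, fun _ => x, fun _ => hx, by simp, by simp⟩

lemma KerAux.isKernel_S (N : Subgroup G) : IsKernel (KerAux.S N) := by
  rintro a b α β ⟨n, s, h, hh, hs, ha⟩ ⟨m, t, k, hk, ht, hb⟩ hαβ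
  have e : Fin (n + 1) ⊕ Fin (m + 1) ≃ Fin (n + m + 1 + 1) :=
    finSumFinEquiv.trans (finCongr (by omega))
  refine ⟨n + m + 1,
    fun i => Sum.elim (fun p => α * s p) (fun q => β * t q) (e.symm i),
    fun i => Sum.elim h k (e.symm i),
    fun i => ?_, ?_, ?_⟩
  · show Sum.elim h k (e.symm i) ∈ N
    rcases e.symm i with p | q
    · exact hh p
    · exact hk q
  · calc Finset.univ.sup' Finset.univ_nonempty
          (fun i => Sum.elim (fun p => α * s p) (fun q => β * t q) (e.symm i))
        = Finset.univ.sup' Finset.univ_nonempty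
          (Sum.elim (fun p => α * s p) (fun q => β * t q)) :=
          KerAux.sup'_comp_equiv e.symm _
      _ = Finset.univ.sup' Finset.univ_nonempty (fun p => α * s p) ⊔
            Finset.univ.sup' Finset.univ_nonempty (fun q => β * t q) := KerAux.sup'_sum _
      _ = 1 := by rw [← KerAux.mul_sup', ← KerAux.mul_sup', hs, ht, mul_one, mul_one, hαβ]
  · symm
    calc Finset.univ.sup' Finset.univ_nonempty
          (fun i => Sum.elim (fun p => α * s p) (fun q => β * t q) (e.symm i) *
            Sum.elim h k (e.symm i))
        = Finset.univ.sup' Finset.univ_nonempty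
          (fun z : Fin (n+1) ⊕ Fin (m+1) =>
            Sum.elim (fun p => α * s p) (fun q => β * t q) z * Sum.elim h k z) :=
          KerAux.sup'_comp_equiv e.symm
            (fun z : Fin (n+1) ⊕ Fin (m+1) =>
              Sum.elim (fun p => α * s p) (fun q => β * t q) z * Sum.elim h k z)
      _ = Finset.univ.sup' Finset.univ_nonempty (fun p : Fin (n+1) => α * s p * h p) ⊔
            Finset.univ.sup' Finset.univ_nonempty (fun q : Fin (m+1) => β * t q * k q) :=
          KerAux.sup'_sum _
      _ = α * a ⊔ β * b := by
          simp_rw [mul_assoc]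
          rw [← KerAux.mul_sup', ← KerAux.mul_sup', ← ha, ← hb]

lemma KerAux.sup'_univ_castSucc {n : ℕ} (f : Fin (n + 2) → G) :
    Finset.univ.sup' Finset.univ_nonempty f =
      (Finset.univ.sup' Finset.univ_nonempty (fun i : Fin (n+1) => f i.castSucc)) ⊔
        f (Fin.last (n + 1)) := by
  apply le_antisymm
  · refine Finset.sup'_le _ _ fun i _ => ?_
    rcases Fin.eq_castSucc_or_eq_last i with ⟨j, rfl⟩ | rfl
    · exact le_sup_of_le_left
        (Finset.le_sup' (fun i : Fin (n+1) => f i.castSucc) (Finset.mem_univ j))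
    · exact le_sup_right
  · refine sup_le ?_ (Finset.le_sup' f (Finset.mem_univ _))
    exact Finset.sup'_le _ _ fun j _ => Finset.le_sup' f (Finset.mem_univ j.castSucc)

lemma KerAux.mem_kernel {N K : Subgroup G} (hK : IsKernel K) (hN : N ≤ K) :
    ∀ (n : ℕ) (s h : Fin (n + 1) → G), (∀ i, h i ∈ N) →
      Finset.univ.sup' Finset.univ_nonempty s = 1 →
      Finset.univ.sup' Finset.univ_nonempty (fun i => s i * h i) ∈ K := by
  intro n
  induction n with
  | zero =>
    intro s h hh hs
    rw [KerAux.sup'_fin_one] at hs ⊢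
    rw [hs, one_mul]
    exact hN (hh _)
  | succ n ih =>
    intro s h hh hs
    rw [KerAux.sup'_univ_castSucc (f := s)] at hs
    rw [KerAux.sup'_univ_castSucc (f := fun i => s i * h i)]
    set σ := Finset.univ.sup' Finset.univ_nonempty (fun i : Fin (n+1) => s i.castSucc) with hσ
    have hy : Finset.univ.sup' Finset.univ_nonempty
        (fun i : Fin (n+1) => (σ⁻¹ * s i.castSucc) * h i.castSucc) ∈ K := by
      apply ih (fun i => σ⁻¹ * s i.castSucc) (fun i => h i.castSucc) (fun i => hh _)
      rw [← KerAux.mul_sup', ← hσ, inv_mul_cancel]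
    have hdec : Finset.univ.sup' Finset.univ_nonempty
        (fun i : Fin (n+1) => s i.castSucc * h i.castSucc) =
        σ * Finset.univ.sup' Finset.univ_nonempty
          (fun i : Fin (n+1) => (σ⁻¹ * s i.castSucc) * h i.castSucc) := by
      rw [KerAux.mul_sup']
      refine Finset.sup'_congr _ rfl fun i _ => ?_
      group
    rw [hdec]
    exact hK _ _ σ (s (Fin.last (n+1))) hy (hN (hh _)) hs

end Aux

/-- The kernel generated by a subgroup `N` consists of the elements
`⋁ᵢ sᵢhᵢ` with `hᵢ ∈ N`, `sᵢ ∈ G` and `⋁ᵢ sᵢ = 1`. -/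
theorem kernel_generated_by_subgroup {G : Type*} [CommGroup G] [Lattice G]
    [CovariantClass G G (· * ·) (· ≤ ·)]
    (N : Subgroup G) :
    ((sInf {K : Subgroup G | IsKernel K ∧ N ≤ K} : Subgroup G) : Set G) =
      {x : G | ∃ (n : ℕ) (s h : Fin (n + 1) → G),
        (∀ i, h i ∈ N) ∧
        Finset.univ.sup' Finset.univ_nonempty s = 1 ∧
        x = Finset.univ.sup' Finset.univ_nonempty (fun i => s i * h i)} := by
  apply Set.Subset.antisymm
  · intro x hx
    have hS : KerAux.S N ∈ {K : Subgroup G | IsKernel K ∧ N ≤ K} :=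
      ⟨KerAux.isKernel_S N, KerAux.le_S N⟩
    exact (Subgroup.mem_sInf.mp hx) _ hS
  · rintro x ⟨n, s, h, hh, hs, hx⟩
    rw [SetLike.mem_coe, Subgroup.mem_sInf]
    rintro K ⟨hK, hN⟩
    rw [hx]
    exact KerAux.mem_kernel hK hN n s h hh hs
end
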